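/- Let Γ be a finite connected (multi)graph, and let e₀, e₁, …, e_n be a chain of edges in Γ (for each i = 1, …, n there is a vertex vᵢ of degree exactly 2 adjacent to exactly e_{i−1} and eᵢ). Then for every spanning 2-forest F of Γ (a spanning subgraph with no cycles and exactly two connected components), the complement E(Γ) ∖ E(F) contains at most two of the edges e₀, …, e_n. -/

import Mathlib

/-- A multigraph: a type of vertices `V`, a type of edges `E`, and an incidence map
sending each edge to its unordered pair of endpoints. -/
structure Multigraph (V E : Type*) where
  ends : E → Sym2 V

namespace Multigraph

variable {V E : Type*}

/-- Two vertices are adjacent via an edge of the edge set `S`. -/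
def Adj (G : Multigraph V E) (S : Set E) (a b : V) : Prop :=
  ∃ s ∈ S, G.ends s = s(a, b)

/-- Reachability inside the spanning subgraph with edge set `S`. -/
def Reach (G : Multigraph V E) (S : Set E) : V → V → Prop :=
  Relation.ReflTransGen (G.Adj S)

/-- The spanning subgraph with edge set `S` is connected. -/
def ConnectedOn (G : Multigraph V E) (S : Set E) : Prop :=
  ∀ a b : V, G.Reach S a b

/-- The edge set `S` is acyclic: every edge of `S` is a bridge of `S`. -/
def IsAcyclicSet (G : Multigraph V E) (S : Set E) : Prop :=
  ∀ s ∈ S, ∀ a b : V, G.ends s = s(a, b) → ¬ G.Reach (S \ {s}) a b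

/-- The connected components of the spanning subgraph with edge set `S`: the quotient
of the vertex set by the reachability relation generated by the edges of `S`. -/
def Components (G : Multigraph V E) (S : Set E) : Type _ :=
  Quot (G.Adj S)

/-- `S` is (the edge set of) a spanning 2-forest: acyclic, with exactly two connected
components. -/
def IsSpanningTwoForest (G : Multigraph V E) (S : Set E) : Prop :=
  G.IsAcyclicSet S ∧ Nat.card (G.Components S) = 2

/-- `e 0, …, e n` is a chain of edges with interior vertices `v 1, …, v n`:
for each `i`, the vertex `v i` has degree exactly two, being incident to exactly the
two distinct non-loop edges `e (i-1)` and `e i`. -/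
def IsChain (G : Multigraph V E) {n : ℕ} (e : Fin (n + 1) → E) (v : Fin n → V) : Prop :=
  ∀ i : Fin n,
    e i.castSucc ≠ e i.succ ∧
    ¬ (G.ends (e i.castSucc)).IsDiag ∧
    ¬ (G.ends (e i.succ)).IsDiag ∧
    (∀ s : E, v i ∈ G.ends s ↔ s = e i.castSucc ∨ s = e i.succ)

end Multigraph


/-!
Pass to a shortest chain `e 0, …, e L` whose edges still include every chain edge missing
from `F`. Dropping an end edge, or cutting out a bounce (`v k = v (k + 1)`, whence
`e k = e (k + 2)`), would shorten it; so `e 0` and `e L` are missing edges occurring only once,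
and so is the tip `e (k + 1)` of any bounce. A bounce would then make the chain symmetric
about it until an end edge repeats, and in a chain without bounces a repeated edge propagates
back to a repetition of `e 0`; hence all its edges are distinct.

Once the edges are distinct, the only edges at `v p, …, v (q - 1)` other than `e p` and
`e q` join two of these vertices, so when `e p, e q ∉ F` this segment is a union of components
of `F`. Now `e 0`, `e L` and a third edge `e q` are missing, and `v 0`, `v q` and the far end
of `e 0` lie in three different components.
-/

theorem Sym2.eq_or_eq_of_ne_mem {α : Type*} {x y w : α} {z : Sym2 α} (hxy : x ≠ y)
    (hx : x ∈ z) (hy : y ∈ z) (hw : w ∈ z) : w = x ∨ w = y := by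
  rw [(Sym2.mem_and_mem_iff hxy).1 ⟨hx, hy⟩] at hw
  exact Sym2.mem_iff.1 hw

theorem Nat.card_ne_two_of_three_ne {α : Type*} {a b c : α} (hab : a ≠ b) (hac : a ≠ c)
    (hbc : b ≠ c) : Nat.card α ≠ 2 :=
  fun h => hbc (((Nat.card_eq_two_iff' a).1 h).unique hab.symm hac.symm)

namespace Multigraph

variable {V E : Type*} {G : Multigraph V E}

theorem Adj.symm {S : Set E} {a b : V} (h : G.Adj S a b) : G.Adj S b a := by
  obtain ⟨s, hs, hends⟩ := h
  exact ⟨s, hs, hends.trans Sym2.eq_swap⟩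

theorem mk_ne_mk_of_adj_closed {S : Set E} {A : Set V}
    (hA : ∀ x ∈ A, ∀ y, G.Adj S x y → y ∈ A) {a b : V} (ha : a ∈ A) (hb : b ∉ A) :
    (Quot.mk (G.Adj S) a : G.Components S) ≠ Quot.mk (G.Adj S) b := by
  intro h
  have hresp : ∀ x y, G.Adj S x y → (x ∈ A) = (y ∈ A) := fun x y hxy =>
    propext ⟨fun hx => hA x hx y hxy, fun hy => hA y hy x hxy.symm⟩
  have hab : (a ∈ A) = (b ∈ A) := congrArg (Quot.lift (· ∈ A) hresp) h
  exact hb (hab ▸ ha)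

def IsChainSeq (G : Multigraph V E) (e : ℕ → E) (v : ℕ → V) (L : ℕ) : Prop :=
  ∀ i < L, e i ≠ e (i + 1) ∧ ¬ (G.ends (e i)).IsDiag ∧
    ∀ s, v i ∈ G.ends s ↔ s = e i ∨ s = e (i + 1)

def ChainCovers (G : Multigraph V E) (X : Set E) (L : ℕ) : Prop :=
  ∃ e v, G.IsChainSeq e v L ∧ X ⊆ e '' Set.Iic L

theorem IsChain.chainCovers {n : ℕ} {e : Fin (n + 1) → E} {v : Fin n → V}
    (hchain : G.IsChain e v) : G.ChainCovers (Set.range e) n := by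
  obtain ⟨⟨a, -⟩, -⟩ := Quot.exists_rep (G.ends (e 0))
  refine ⟨fun i => e ⟨min i n, by omega⟩, fun i => if h : i < n then v ⟨i, h⟩ else a,
    fun i hi => ?_, ?_⟩
  · obtain ⟨hne, hdiag, -, hinc⟩ := hchain ⟨i, hi⟩
    have hi' : min i n = i := by omega
    have hi'' : min (i + 1) n = i + 1 := by omega
    simp only [hi, hi', hi'', dite_true]
    exact ⟨hne, hdiag, hinc⟩
  · rintro _ ⟨i, rfl⟩
    exact ⟨i, Set.mem_Iic.2 (by omega), by simp [min_eq_left (Nat.lt_succ_iff.1 i.2)]⟩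

namespace IsChainSeq

variable {e : ℕ → E} {v : ℕ → V} {L : ℕ}

theorem ne_succ (hc : G.IsChainSeq e v L) {i : ℕ} (hi : i < L) : e i ≠ e (i + 1) :=
  (hc i hi).1

theorem eq_or_eq_of_mem (hc : G.IsChainSeq e v L) {i : ℕ} (hi : i < L) {s : E}
    (h : v i ∈ G.ends s) : s = e i ∨ s = e (i + 1) :=
  ((hc i hi).2.2 s).1 h

theorem mem_left (hc : G.IsChainSeq e v L) {i : ℕ} (hi : i < L) : v i ∈ G.ends (e i) :=
  ((hc i hi).2.2 _).2 (Or.inl rfl)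

theorem mem_right (hc : G.IsChainSeq e v L) {i : ℕ} (hi : i < L) :
    v i ∈ G.ends (e (i + 1)) :=
  ((hc i hi).2.2 _).2 (Or.inr rfl)

theorem mono (hc : G.IsChainSeq e v L) {L' : ℕ} (h : L' ≤ L) : G.IsChainSeq e v L' :=
  fun i hi => hc i (by omega)

theorem tail (hc : G.IsChainSeq e v (L + 1)) :
    G.IsChainSeq (fun i => e (i + 1)) (fun i => v (i + 1)) L :=
  fun i hi => hc (i + 1) (by omega)

theorem splice (hc : G.IsChainSeq e v L) {k : ℕ} (hk : k + 2 ≤ L) (he : e k = e (k + 2)) :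
    G.IsChainSeq (fun i => if i ≤ k then e i else e (i + 2))
      (fun i => if i < k then v i else v (i + 2)) (L - 2) := by
  intro i hi
  by_cases hik : i < k
  · simpa [hik, hik.le, show i + 1 ≤ k by omega] using hc i (by omega)
  · have hshift : (if i ≤ k then e i else e (i + 2)) = e (i + 2) := by
      split_ifs with h
      · obtain rfl : i = k := by omega
        exact he
      · rfl
    simpa [hik, hshift, show ¬ i + 1 ≤ k by omega, add_right_comm i 1 2]
      using hc (i + 2) (by omega)

theorem eq_add_two_of_bounce (hc : G.IsChainSeq e v L) {k : ℕ} (hk : k + 1 < L)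
    (hb : v k = v (k + 1)) : e k = e (k + 2) :=
  (hc.eq_or_eq_of_mem hk (hb ▸ hc.mem_left (by omega))).resolve_left (hc.ne_succ (by omega))

theorem injOn_of_forall_ne_succ (hc : G.IsChainSeq e v L)
    (hnb : ∀ k, k + 1 < L → v k ≠ v (k + 1)) (h0 : ∀ m ≤ L, e m = e 0 → m = 0) :
    Set.InjOn e (Set.Iic L) := by
  suffices h : ∀ g i, 0 < g → i + g ≤ L → e i ≠ e (i + g) by
    intro i hi j hj hij
    simp only [Set.mem_Iic] at hi hj
    by_contra hne
    rcases Nat.lt_or_gt_of_ne hne with hlt | hlt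
    · exact h (j - i) i (by omega) (by omega) (by rwa [Nat.add_sub_cancel' hlt.le])
    · exact h (i - j) j (by omega) (by omega) (by rw [Nat.add_sub_cancel' hlt.le]; exact hij.symm)
  intro g
  induction g using Nat.strong_induction_on with
  | _ g ihg =>
  intro i
  induction i with
  | zero => exact fun hg hgL h => absurd (h0 g (by omega) (by simpa using h.symm)) (by omega)
  | succ i ihi =>
    intro hg hL h
    obtain rfl | hg1 := eq_or_ne g 1
    · exact hc.ne_succ (by omega) h
    have hw : v (i + g) ∈ G.ends (e (i + 1)) := by
      rw [h, add_right_comm]; exact hc.mem_right (by omega)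
    rcases Sym2.eq_or_eq_of_ne_mem (hnb i (by omega)) (hc.mem_right (by omega))
      (hc.mem_left (by omega)) hw with hvi | hvi
    · -- same direction at both occurrences: the repetition moves one step back
      rcases hc.eq_or_eq_of_mem (i := i) (by omega) (hvi ▸ hc.mem_left (i := i + g) (by omega))
        with he | he
      · exact ihi hg (by omega) he.symm
      · exact hc.ne_succ (i := i + g) (by omega) (by rw [he, h, add_right_comm])
    · -- opposite directions: `e (i + 2) = e (i + g)` is a repetition at distance `g - 2`
      obtain rfl | hg2 := eq_or_ne g 2
      · exact hnb (i + 1) (by omega) (by rw [← hvi])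
      rcases hc.eq_or_eq_of_mem (i := i + 1) (by omega)
        (hvi ▸ hc.mem_left (i := i + g) (by omega)) with he | he
      · exact hc.ne_succ (i := i + g) (by omega) (by rw [he, h, add_right_comm])
      · exact ihg (g - 2) (by omega) (i + 2) (by omega) (by omega)
          (by rw [show i + 2 + (g - 2) = i + g by omega]; exact he.symm)

theorem mirror_step (hc : G.IsChainSeq e v L)
    (htip : ∀ k, k + 1 < L → v k = v (k + 1) → ∀ m ≤ L, e m = e (k + 1) → m = k + 1)
    {a b : ℕ} (hab : a < b) (hbL : b + 2 ≤ L) (he : e (a + 1) = e (b + 1))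
    (hv : v (a + 1) = v b) : e a = e (b + 2) ∧ v a = v (b + 1) := by
  have hna : v a ≠ v (a + 1) := fun h => by
    have := htip a (by omega) h (b + 1) (by omega) he.symm
    omega
  have hnb : v b ≠ v (b + 1) := fun h => by
    have := htip b (by omega) h (a + 1) (by omega) he
    omega
  have hw : v (b + 1) ∈ G.ends (e (a + 1)) := he ▸ hc.mem_left (by omega)
  rcases Sym2.eq_or_eq_of_ne_mem hna (hc.mem_right (by omega)) (hc.mem_left (by omega)) hw
    with hva | hva
  · refine ⟨?_, hva.symm⟩
    rcases hc.eq_or_eq_of_mem (i := a) (by omega) (hva ▸ hc.mem_right (by omega)) with h | h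
    · exact h.symm
    · exact absurd (h.trans he) (hc.ne_succ (by omega)).symm
  · exact absurd (hv.symm.trans hva.symm) hnb

theorem forall_ne_succ_of_unique (hc : G.IsChainSeq e v L)
    (h0 : ∀ m ≤ L, e m = e 0 → m = 0) (hL : ∀ m ≤ L, e m = e L → m = L)
    (htip : ∀ k, k + 1 < L → v k = v (k + 1) → ∀ m ≤ L, e m = e (k + 1) → m = k + 1) :
    ∀ k, k + 1 < L → v k ≠ v (k + 1) := by
  intro k hk hb
  have mirror : ∀ d ≤ k, k + d + 2 ≤ L →
      e (k - d) = e (k + d + 2) ∧ v (k - d) = v (k + d + 1) := by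
    intro d
    induction d with
    | zero => exact fun _ _ => ⟨hc.eq_add_two_of_bounce hk hb, hb⟩
    | succ d ih =>
      intro hd hdL
      obtain ⟨he, hv⟩ := ih (by omega) (by omega)
      rw [show k - d = k - (d + 1) + 1 by omega] at he hv
      rw [show k + (d + 1) + 2 = k + d + 1 + 2 by omega,
        show k + (d + 1) + 1 = k + d + 1 + 1 by omega]
      exact hc.mirror_step htip (by omega) (by omega) he hv
  rcases le_total (2 * k + 2) L with hkL | hkL
  · have := h0 _ hkL (by simpa [two_mul, add_assoc] using (mirror k le_rfl (by omega)).1.symm)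
    omega
  · have hmir := (mirror (L - k - 2) (by omega) (by omega)).1
    rw [show k + (L - k - 2) + 2 = L by omega] at hmir
    have := hL _ (by omega) hmir
    omega

end IsChainSeq

section Minimal

variable {e : ℕ → E} {v : ℕ → V} {L : ℕ} {X : Set E}

theorem unique_of_minimal (hX : X ⊆ e '' Set.Iic L) (hmin : ∀ L' < L, ¬ G.ChainCovers X L')
    {e' : ℕ → E} {v' : ℕ → V} {L' k : ℕ} (hc' : G.IsChainSeq e' v' L') (hL' : L' < L)
    (hcov : ∀ m ≤ L, m ≠ k → e m ∈ e' '' Set.Iic L') :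
    e k ∈ X ∧ ∀ m ≤ L, e m = e k → m = k := by
  obtain ⟨x, hxX, hx⟩ := Set.not_subset.1 fun h => hmin L' hL' ⟨e', v', hc', h⟩
  obtain ⟨m, hm, rfl⟩ := hX hxX
  obtain rfl : m = k := by_contra fun h => hx (hcov m hm h)
  exact ⟨hxX, fun m' hm' he => by_contra fun h => hx (he ▸ hcov m' hm' h)⟩

namespace IsChainSeq

theorem unique_zero_of_minimal (hc : G.IsChainSeq e v L) (hX : X ⊆ e '' Set.Iic L)
    (hmin : ∀ L' < L, ¬ G.ChainCovers X L') (hL : 0 < L) :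
    e 0 ∈ X ∧ ∀ m ≤ L, e m = e 0 → m = 0 := by
  obtain ⟨L, rfl⟩ : ∃ L', L = L' + 1 := ⟨L - 1, by omega⟩
  refine unique_of_minimal hX hmin hc.tail (Nat.lt_succ_self L) fun m hm hm0 => ?_
  exact ⟨m - 1, Set.mem_Iic.2 (by omega),
    congrArg e (Nat.sub_add_cancel (Nat.pos_of_ne_zero hm0))⟩

theorem unique_last_of_minimal (hc : G.IsChainSeq e v L) (hX : X ⊆ e '' Set.Iic L)
    (hmin : ∀ L' < L, ¬ G.ChainCovers X L') (hL : 0 < L) :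
    e L ∈ X ∧ ∀ m ≤ L, e m = e L → m = L :=
  unique_of_minimal hX hmin (hc.mono (Nat.sub_le L 1)) (by omega)
    fun m hm hmL => ⟨m, Set.mem_Iic.2 (by omega), rfl⟩

theorem unique_tip_of_minimal (hc : G.IsChainSeq e v L) (hX : X ⊆ e '' Set.Iic L)
    (hmin : ∀ L' < L, ¬ G.ChainCovers X L') {k : ℕ} (hk : k + 1 < L) (hb : v k = v (k + 1)) :
    ∀ m ≤ L, e m = e (k + 1) → m = k + 1 := by
  have he := hc.eq_add_two_of_bounce hk hb
  refine (unique_of_minimal hX hmin (hc.splice (by omega) he) (by omega) fun m hm hmk => ?_).2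
  rcases le_or_gt m k with hmk' | hmk'
  · exact ⟨m, Set.mem_Iic.2 (by omega), if_pos hmk'⟩
  · refine ⟨m - 2, Set.mem_Iic.2 (by omega), ?_⟩
    dsimp only
    split_ifs with h
    · rw [show m - 2 = k by omega, he, show k + 2 = m by omega]
    · rw [Nat.sub_add_cancel (by omega)]

theorem injOn_of_minimal (hc : G.IsChainSeq e v L) (hX : X ⊆ e '' Set.Iic L)
    (hmin : ∀ L' < L, ¬ G.ChainCovers X L') : Set.InjOn e (Set.Iic L) := by
  rcases Nat.eq_zero_or_pos L with rfl | hL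
  · exact fun i hi j hj _ => (Nat.le_zero.1 hi).trans (Nat.le_zero.1 hj).symm
  have h0 := (hc.unique_zero_of_minimal hX hmin hL).2
  have hlast := (hc.unique_last_of_minimal hX hmin hL).2
  exact hc.injOn_of_forall_ne_succ (hc.forall_ne_succ_of_unique h0 hlast
    fun k hk hb => hc.unique_tip_of_minimal hX hmin hk hb) h0

end IsChainSeq

end Minimal

namespace IsChainSeq

variable {e : ℕ → E} {v : ℕ → V} {L : ℕ}

theorem mem_ends_iff (hc : G.IsChainSeq e v L) (hinj : Set.InjOn e (Set.Iic L)) {m k : ℕ}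
    (hm : m < L) (hk : k ≤ L) : v m ∈ G.ends (e k) ↔ k = m ∨ k = m + 1 := by
  constructor
  · intro h
    rcases hc.eq_or_eq_of_mem hm h with h | h
    · exact Or.inl (hinj hk (Set.mem_Iic.2 hm.le) h)
    · exact Or.inr (hinj hk (Set.mem_Iic.2 hm) h)
  · rintro (rfl | rfl)
    exacts [hc.mem_left hm, hc.mem_right hm]

theorem adj_closed_segment (hc : G.IsChainSeq e v L) (hinj : Set.InjOn e (Set.Iic L))
    {F : Set E} {p q : ℕ} (hqL : q ≤ L) (hp : e p ∉ F) (hq : e q ∉ F) :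
    ∀ x ∈ v '' Set.Ico p q, ∀ y, G.Adj F x y → y ∈ v '' Set.Ico p q := by
  rintro _ ⟨t, ht, rfl⟩ y ⟨s, hsF, hends⟩
  rw [Set.mem_Ico] at ht
  have hmem : ∀ m, p < m → m < q → y ∈ G.ends (e m) → y ∈ v '' Set.Ico p q := by
    intro m hpm hmq hy
    obtain ⟨m, rfl⟩ : ∃ m', m = m' + 1 := ⟨m - 1, by omega⟩
    have hne : v m ≠ v (m + 1) := fun h => by
      have := (hc.mem_ends_iff hinj (by omega) (by omega)).1 (h ▸ hc.mem_left (i := m) (by omega))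
      omega
    rcases Sym2.eq_or_eq_of_ne_mem hne (hc.mem_right (by omega)) (hc.mem_left (by omega)) hy
      with rfl | rfl
    · exact ⟨m, Set.mem_Ico.2 (by omega), rfl⟩
    · exact ⟨m + 1, Set.mem_Ico.2 (by omega), rfl⟩
  have hy : y ∈ G.ends s := hends ▸ Sym2.mem_mk_right _ _
  rcases hc.eq_or_eq_of_mem (i := t) (by omega) (hends ▸ Sym2.mem_mk_left _ _) with rfl | rfl
  · exact hmem t (lt_of_le_of_ne ht.1 fun h => hp (h ▸ hsF)) ht.2 hy
  · exact hmem (t + 1) (by omega) (lt_of_le_of_ne ht.2 fun h => hq (h ▸ hsF)) hy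

theorem card_components_ne_two (hc : G.IsChainSeq e v L) (hinj : Set.InjOn e (Set.Iic L))
    {F : Set E} {q : ℕ} (hq0 : 0 < q) (hqL : q < L) (h0 : e 0 ∉ F) (hq : e q ∉ F)
    (hL : e L ∉ F) : Nat.card (G.Components F) ≠ 2 := by
  have hv0 : v 0 ∈ G.ends (e 0) := hc.mem_left (by omega)
  have hx : ∀ m < L, v m ≠ Sym2.Mem.other hv0 := by
    intro m hm h
    have := (hc.mem_ends_iff hinj hm (Nat.zero_le L)).1 (h ▸ Sym2.other_mem hv0)
    obtain rfl : m = 0 := by omega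
    exact Sym2.other_ne (hc 0 (by omega)).2.1 hv0 h.symm
  have hvq : ∀ m < q, v m ≠ v q := by
    intro m hm h
    have := (hc.mem_ends_iff hinj (by omega) (k := q + 1) (by omega)).1 (h ▸ hc.mem_right hqL)
    omega
  have hA := hc.adj_closed_segment hinj hqL.le h0 hq
  have hB := hc.adj_closed_segment hinj le_rfl hq hL
  exact Nat.card_ne_two_of_three_ne
    (mk_ne_mk_of_adj_closed hA ⟨0, Set.mem_Ico.2 ⟨le_rfl, hq0⟩, rfl⟩
      fun ⟨m, hm, h⟩ => hvq m (Set.mem_Ico.1 hm).2 h)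
    (mk_ne_mk_of_adj_closed hA ⟨0, Set.mem_Ico.2 ⟨le_rfl, hq0⟩, rfl⟩
      fun ⟨m, hm, h⟩ => hx m (by rw [Set.mem_Ico] at hm; omega) h)
    (mk_ne_mk_of_adj_closed hB ⟨q, Set.mem_Ico.2 ⟨le_rfl, hqL⟩, rfl⟩
      fun ⟨m, hm, h⟩ => hx m (Set.mem_Ico.1 hm).2 h)

end IsChainSeq

end Multigraph

theorem Multigraph.chain_edges_not_in_spanningTwoForest_le_two_general
    {V E : Type*} (G : Multigraph V E)
    {n : ℕ} (e : Fin (n + 1) → E) (v : Fin n → V) (hchain : G.IsChain e v)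
    (F : Set E) (hF : G.IsSpanningTwoForest F) :
    Set.ncard {s : E | (∃ i, e i = s) ∧ s ∉ F} ≤ 2 := by
  classical
  set X := {s : E | (∃ i, e i = s) ∧ s ∉ F}
  by_contra! hX
  have hcov : ∃ L, G.ChainCovers X L := by
    obtain ⟨e', v', hc, hrange⟩ := hchain.chainCovers
    exact ⟨n, e', v', hc, fun s hs => hrange hs.1⟩
  obtain ⟨e', v', hc, hXL⟩ := Nat.find_spec hcov
  have hmin : ∀ L' < Nat.find hcov, ¬ G.ChainCovers X L' := fun _ => Nat.find_min hcov
  set L := Nat.find hcov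
  obtain ⟨_, hsX, hs⟩ := Set.exists_mem_notMem_of_ncard_lt_ncard (s := {e' 0, e' L}) (t := X)
    ((Set.ncard_insert_le _ _).trans_lt (by rwa [Set.ncard_singleton]))
  obtain ⟨q, hq, rfl⟩ := hXL hsX
  have hq0 : q ≠ 0 := by rintro rfl; simp at hs
  have hqL : q ≠ L := by rintro rfl; simp at hs
  have hL : 0 < L := by rw [Set.mem_Iic] at hq; omega
  exact hc.card_components_ne_two (hc.injOn_of_minimal hXL hmin) (Nat.pos_of_ne_zero hq0)
    (lt_of_le_of_ne hq hqL) (hc.unique_zero_of_minimal hXL hmin hL).1.2 hsX.2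
    (hc.unique_last_of_minimal hXL hmin hL).1.2 hF.2

/-- **At most two chain edges lie outside a spanning 2-forest.** If `Γ` is a finite
connected multigraph and `e₀, …, e_n` is a chain of edges of `Γ`, then for every
spanning 2-forest `F` of `Γ` (a spanning subgraph with no cycles and exactly two
connected components) the complement `E(Γ) ∖ E(F)` contains at most two of the edges
`e₀, …, e_n`. -/
theorem Multigraph.chain_edges_not_in_spanningTwoForest_le_two
    {V E : Type*} [Fintype V] [Fintype E] (G : Multigraph V E)
    (hconn : G.ConnectedOn Set.univ)
    {n : ℕ} (e : Fin (n + 1) → E) (v : Fin n → V) (hchain : G.IsChain e v)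
    (F : Set E) (hF : G.IsSpanningTwoForest F) :
    Set.ncard {s : E | (∃ i, e i = s) ∧ s ∉ F} ≤ 2 :=
  Multigraph.chain_edges_not_in_spanningTwoForest_le_two_general G e v hchain F hF
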